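/- Let R be a reduced root system with positive system >, and A a set of pairwise strongly orthogonal roots satisfying property ## (for disjoint A₁,A₂ ⊂ A and β>0 with S_{A₁}(β)<0 one has S_{A₂}(β)>0 and S_{A₁}S_{A₂}(β)<0). For B ⊂ A define R⁺_B = {β ∈ R : β > 0 and S_B(β) < 0}. Then for disjoint A', A'' ⊂ A the sets R⁺_{A'} and R⁺_{A''} are disjoint and R⁺_{A'∪A''} = R⁺_{A'} ∪ R⁺_{A''}. -/

import Mathlib

/-!
Property `##` rules out a pair `γ, -γ` inside `A`, and two strongly orthogonal roots that are not
proportional are orthogonal: their Cartan integers have product `4 cos² θ < 4`, so one of them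
is `±1`, which would make the sum or the difference of the two roots a root. Hence `A` is an
orthogonal set, `S_B` is a product of commuting involutions preserving `R`, and
`S_{A' ∪ A''} = S_{A'} S_{A''}`. Property `##` applied to `β` then gives the disjointness and
`R⁺_{A'} ⊆ R⁺_{A' ∪ A''}`; applied to the positive root `S_{A''} β` it gives the reverse inclusion.
-/

open scoped InnerProductSpace

variable {V : Type*} [NormedAddCommGroup V] [InnerProductSpace ℝ V]

/-- The (orthogonal) reflection in the root `α`: `s_α(v) = v - (2⟪v,α⟫/⟪α,α⟫)α`. -/
noncomputable def sRefl (α v : V) : V := v - (2 * ⟪v, α⟫_ℝ / ⟪α, α⟫_ℝ) • α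

/-- The coroot of `α`, identified with a vector via the invariant inner product. -/
noncomputable def coroot (α : V) : V := (2 / ⟪α, α⟫_ℝ) • α

/-- `S_A`: the product of the (commuting) reflections in the pairwise orthogonal
elements of `A`, given by its closed formula. -/
noncomputable def SRefl (A : Finset V) (v : V) : V :=
  v - ∑ α ∈ A, (2 * ⟪v, α⟫_ℝ / ⟪α, α⟫_ℝ) • α

/-- A (reduced) root system in `V`, with the ambient inner product Weyl-invariant. -/
structure IsRootSystem (R : Set V) : Prop where
  finite : R.Finite
  nonempty : R.Nonempty
  ne_zero : ∀ α ∈ R, α ≠ (0 : V)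
  refl_mem : ∀ α ∈ R, ∀ β ∈ R, sRefl α β ∈ R
  integral : ∀ α ∈ R, ∀ β ∈ R, ∃ n : ℤ, 2 * ⟪β, α⟫_ℝ / ⟪α, α⟫_ℝ = (n : ℝ)
  reduced : ∀ α ∈ R, ∀ t : ℝ, t • α ∈ R → t = 1 ∨ t = -1

/-- `α` and `β` are strongly orthogonal: neither their sum nor difference is a root. -/
def StronglyOrthogonal (R : Set V) (α β : V) : Prop := α + β ∉ R ∧ α - β ∉ R

/-- A strongly orthogonal subset of `R`. -/
def IsSOS (R A : Set V) : Prop := A ⊆ R ∧ A.Pairwise (StronglyOrthogonal R)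

/-- A choice of positive roots in `R`. -/
structure IsPositiveSystem (R P : Set V) : Prop where
  subset : P ⊆ R
  mem_or_neg_mem : ∀ α ∈ R, α ∈ P ∨ -α ∈ P
  not_both : ∀ α ∈ P, -α ∉ P
  add_mem : ∀ α ∈ P, ∀ β ∈ P, α + β ∈ R → α + β ∈ P

/-- Property `#(R,>,A)`: for distinct `α₁, α₂ ∈ A` and `β > 0`,
`s_{α₁}(β) < 0` implies `s_{α₂}(β) > 0`. -/
def PropSharp (P A : Set V) : Prop :=
  ∀ α₁ ∈ A, ∀ α₂ ∈ A, α₁ ≠ α₂ → ∀ β ∈ P, -(sRefl α₁ β) ∈ P → sRefl α₂ β ∈ P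

/-- Property `##(R,>,A)`: for disjoint `A₁, A₂ ⊆ A` and `β > 0` with `S_{A₁}(β) < 0`
one has `S_{A₂}(β) > 0` and `S_{A₁}S_{A₂}(β) < 0`. -/
def PropSharpSharp (P : Set V) (A : Finset V) : Prop :=
  ∀ A₁ ⊆ A, ∀ A₂ ⊆ A, Disjoint A₁ A₂ → ∀ β ∈ P, -(SRefl A₁ β) ∈ P →
    SRefl A₂ β ∈ P ∧ -(SRefl A₁ (SRefl A₂ β)) ∈ P

/-- `R⁺_B = {β : β > 0 ∧ S_B(β) < 0}`. -/
noncomputable def RPlus (P : Set V) (B : Finset V) : Set V :=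
  {β | β ∈ P ∧ -(SRefl B β) ∈ P}

theorem sRefl_neg_left (α v : V) : sRefl (-α) v = sRefl α v := by
  simp only [sRefl, inner_neg_right, inner_neg_left, neg_neg, smul_neg, neg_smul, mul_neg,
    neg_div]

theorem sRefl_self {α : V} (hα : α ≠ 0) : sRefl α α = -α := by
  rw [sRefl, mul_div_assoc, div_self (inner_self_ne_zero.mpr hα), mul_one, two_smul]
  abel

theorem SRefl_singleton (α v : V) : SRefl {α} v = sRefl α v := by
  simp [SRefl, sRefl]

theorem inner_SRefl (B : Finset V) (v w : V) :
    ⟪SRefl B v, w⟫_ℝ = ⟪v, w⟫_ℝ - ∑ γ ∈ B, 2 * ⟪v, γ⟫_ℝ / ⟪γ, γ⟫_ℝ * ⟪γ, w⟫_ℝ := by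
  simp [SRefl, inner_sub_left, sum_inner, real_inner_smul_left]

theorem inner_SRefl_of_forall_inner_eq_zero {B : Finset V} {w : V}
    (h : ∀ γ ∈ B, ⟪γ, w⟫_ℝ = 0) (v : V) : ⟪SRefl B v, w⟫_ℝ = ⟪v, w⟫_ℝ := by
  rw [inner_SRefl, Finset.sum_eq_zero fun γ hγ => by rw [h γ hγ, mul_zero], sub_zero]

theorem inner_SRefl_of_mem {B : Finset V} (horth : (B : Set V).Pairwise fun x y => ⟪x, y⟫_ℝ = 0)
    {α : V} (hα : α ∈ B) (hα₀ : α ≠ 0) (v : V) : ⟪SRefl B v, α⟫_ℝ = -⟪v, α⟫_ℝ := by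
  rw [inner_SRefl, Finset.sum_eq_single α
    (fun γ hγ hne => by rw [horth hγ hα hne, mul_zero]) (absurd hα)]
  field_simp [inner_self_ne_zero.mpr hα₀]
  ring

theorem SRefl_union [DecidableEq V] {B₁ B₂ : Finset V} (hdisj : Disjoint B₁ B₂)
    (horth : ((B₁ ∪ B₂ : Finset V) : Set V).Pairwise fun x y => ⟪x, y⟫_ℝ = 0) (v : V) :
    SRefl (B₁ ∪ B₂) v = SRefl B₁ (SRefl B₂ v) := by
  have hcoeff : ∀ α ∈ B₁, ⟪SRefl B₂ v, α⟫_ℝ = ⟪v, α⟫_ℝ := fun α hα =>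
    inner_SRefl_of_forall_inner_eq_zero (fun γ hγ => horth (by simp [hγ]) (by simp [hα])
      (fun h => Finset.disjoint_left.mp hdisj hα (by rwa [← h]))) v
  have hsum : ∑ α ∈ B₁, (2 * ⟪SRefl B₂ v, α⟫_ℝ / ⟪α, α⟫_ℝ) • α
      = ∑ α ∈ B₁, (2 * ⟪v, α⟫_ℝ / ⟪α, α⟫_ℝ) • α :=
    Finset.sum_congr rfl fun α hα => by rw [hcoeff α hα]
  unfold SRefl at hsum ⊢
  rw [hsum, Finset.sum_union hdisj]
  abel

theorem SRefl_SRefl {B : Finset V} (horth : (B : Set V).Pairwise fun x y => ⟪x, y⟫_ℝ = 0)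
    (h₀ : ∀ α ∈ B, α ≠ 0) (v : V) : SRefl B (SRefl B v) = v := by
  have hcoeff : ∀ α ∈ B, (2 * ⟪SRefl B v, α⟫_ℝ / ⟪α, α⟫_ℝ) • α
      = -((2 * ⟪v, α⟫_ℝ / ⟪α, α⟫_ℝ) • α) := fun α hα => by
    rw [inner_SRefl_of_mem horth hα (h₀ α hα), ← neg_smul, mul_neg, neg_div]
  rw [SRefl, Finset.sum_congr rfl hcoeff, Finset.sum_neg_distrib, SRefl]
  abel

namespace IsRootSystem

variable {R : Set V}

theorem neg_mem (hR : IsRootSystem R) {α : V} (hα : α ∈ R) : -α ∈ R := by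
  simpa [sRefl_self (hR.ne_zero α hα)] using hR.refl_mem α hα α hα

theorem SRefl_mem [DecidableEq V] (hR : IsRootSystem R) {B : Finset V} (hB : (B : Set V) ⊆ R)
    (horth : (B : Set V).Pairwise fun x y => ⟪x, y⟫_ℝ = 0) {v : V} (hv : v ∈ R) :
    SRefl B v ∈ R := by
  induction B using Finset.induction_on with
  | empty => simpa [SRefl] using hv
  | insert a s ha ih =>
    rw [Finset.insert_eq] at hB horth ⊢
    rw [SRefl_union (Finset.disjoint_singleton_left.mpr ha) horth, SRefl_singleton]
    exact hR.refl_mem a (hB (by simp)) _ (ih (subset_trans (by simp) hB)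
      (horth.mono (by simp)))

theorem stronglyOrthogonal_comm (hR : IsRootSystem R) {α β : V} :
    StronglyOrthogonal R α β ↔ StronglyOrthogonal R β α := by
  have key : ∀ {α β : V}, StronglyOrthogonal R α β → StronglyOrthogonal R β α :=
    fun ⟨hadd, hsub⟩ => ⟨by rwa [add_comm], fun h => hsub (by simpa using hR.neg_mem h)⟩
  exact ⟨key, key⟩

theorem cartan_ne_one_of_stronglyOrthogonal (hR : IsRootSystem R) {α β : V} (hα : α ∈ R)
    (hβ : β ∈ R) (h : StronglyOrthogonal R α β) {n : ℤ}
    (hn : 2 * ⟪α, β⟫_ℝ / ⟪β, β⟫_ℝ = n) : n ≠ 1 ∧ n ≠ -1 := by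
  have hmem := hR.refl_mem β hβ α hα
  rw [sRefl, hn] at hmem
  exact ⟨fun h1 => h.2 (by simpa [h1] using hmem), fun h1 => h.1 (by simpa [h1] using hmem)⟩

theorem inner_mul_inner_lt (hR : IsRootSystem R) {α β : V} (hα : α ∈ R) (hβ : β ∈ R)
    (hne : β ≠ α) (hne' : β ≠ -α) : ⟪α, β⟫_ℝ * ⟪α, β⟫_ℝ < ⟪α, α⟫_ℝ * ⟪β, β⟫_ℝ := by
  have hlt : |⟪α, β⟫_ℝ| < ‖α‖ * ‖β‖ := by
    refine (abs_real_inner_le_norm α β).lt_of_ne fun heq => ?_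
    obtain ⟨r, -, rfl⟩ :=
      (norm_inner_eq_norm_iff (𝕜 := ℝ) (hR.ne_zero α hα) (hR.ne_zero _ hβ)).mp heq
    rcases hR.reduced α hα r hβ with rfl | rfl <;> simp_all
  rw [real_inner_self_eq_norm_mul_norm, real_inner_self_eq_norm_mul_norm, ← abs_mul_abs_self]
  nlinarith [abs_nonneg ⟪α, β⟫_ℝ]

theorem inner_eq_zero_of_stronglyOrthogonal (hR : IsRootSystem R) {α β : V} (hα : α ∈ R)
    (hβ : β ∈ R) (hne : β ≠ α) (hne' : β ≠ -α) (h : StronglyOrthogonal R α β) :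
    ⟪α, β⟫_ℝ = 0 := by
  obtain ⟨m, hm⟩ := hR.integral β hβ α hα
  obtain ⟨n, hn⟩ := hR.integral α hα β hβ
  have hm1 := hR.cartan_ne_one_of_stronglyOrthogonal hα hβ h hm
  have hn1 := hR.cartan_ne_one_of_stronglyOrthogonal hβ hα (hR.stronglyOrthogonal_comm.mp h) hn
  by_contra h0
  have hαα : 0 < ⟪α, α⟫_ℝ := real_inner_self_pos.mpr (hR.ne_zero α hα)
  have hββ : 0 < ⟪β, β⟫_ℝ := real_inner_self_pos.mpr (hR.ne_zero β hβ)
  -- `m n = 4 cos² ∠(α, β)`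
  have hprod : ((m * n : ℤ) : ℝ) * (⟪α, α⟫_ℝ * ⟪β, β⟫_ℝ) = 4 * (⟪α, β⟫_ℝ * ⟪α, β⟫_ℝ) := by
    push_cast
    rw [← hm, ← hn, real_inner_comm α β]
    field_simp
    ring
  have hlt := hR.inner_mul_inner_lt hα hβ hne hne'
  have hpos : 0 < m * n := by
    have : (0 : ℝ) < ((m * n : ℤ) : ℝ) := by
      have := mul_self_pos.mpr h0
      nlinarith
    exact_mod_cast this
  have hlt4 : m * n < 4 := by
    have : ((m * n : ℤ) : ℝ) < 4 := by nlinarith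
    exact_mod_cast this
  have hm0 : m ≠ 0 := by rintro rfl; simp at hpos
  have hn0 : n ≠ 0 := by rintro rfl; simp at hpos
  have hm2 : 2 ≤ |m| := le_abs.mpr (by omega)
  have hn2 : 2 ≤ |n| := le_abs.mpr (by omega)
  have : 4 ≤ |m * n| := by rw [abs_mul]; nlinarith
  rw [abs_of_pos hpos] at this
  omega

end IsRootSystem

namespace PropSharpSharp

variable {R P : Set V} {A B₁ B₂ : Finset V}

theorem not_neg_mem (hsharp : PropSharpSharp P A) (hP : IsPositiveSystem R P) {γ : V}
    (hγ₀ : γ ≠ 0) (hγP : γ ∈ P) (hγA : γ ∈ A) (hnegA : -γ ∈ A) : False := by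
  have hne : γ ≠ -γ := fun h => by
    rw [eq_neg_iff_add_eq_zero, ← two_smul ℝ, smul_eq_zero] at h
    exact hγ₀ (h.resolve_left two_ne_zero)
  have hself : ∀ δ ∈ ({γ, -γ} : Set V), SRefl {δ} γ = -γ := by
    rintro δ (rfl | rfl) <;> simp [SRefl_singleton, sRefl_neg_left, sRefl_self hγ₀]
  -- `S_{γ}` makes `γ` negative, so `##` forces `S_{-γ} γ = -γ` to be positive
  have := (hsharp {γ} (by simpa) {-γ} (by simpa) (by simpa using hne) γ hγP
    (by rwa [hself γ (by simp), neg_neg])).1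
  exact hP.not_both γ hγP (by rwa [hself (-γ) (by simp)] at this)

theorem pairwise_inner_eq_zero (hsharp : PropSharpSharp P A) (hR : IsRootSystem R)
    (hP : IsPositiveSystem R P) (hA : IsSOS R A) :
    (A : Set V).Pairwise fun x y => ⟪x, y⟫_ℝ = 0 := by
  intro x hx y hy hxy
  have hx₀ := hR.ne_zero x (hA.1 hx)
  by_cases hanti : y = -x
  · subst hanti
    rcases hP.mem_or_neg_mem x (hA.1 hx) with hxP | hxP
    · exact (hsharp.not_neg_mem hP hx₀ hxP hx hy).elim
    · exact (hsharp.not_neg_mem hP (neg_ne_zero.mpr hx₀) hxP hy (by simpa using hx)).elim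
  · exact hR.inner_eq_zero_of_stronglyOrthogonal (hA.1 hx) (hA.1 hy) (Ne.symm hxy) hanti
      (hA.2 hx hy hxy)

theorem disjoint_RPlus (hsharp : PropSharpSharp P A) (hP : IsPositiveSystem R P)
    (h₁ : B₁ ⊆ A) (h₂ : B₂ ⊆ A) (hd : Disjoint B₁ B₂) :
    Disjoint (RPlus P B₁) (RPlus P B₂) :=
  Set.disjoint_left.mpr fun _ hβ₁ hβ₂ =>
    hP.not_both _ (hsharp B₁ h₁ B₂ h₂ hd _ hβ₁.1 hβ₁.2).1 hβ₂.2

theorem RPlus_subset_RPlus_union [DecidableEq V] (hsharp : PropSharpSharp P A)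
    (horth : (A : Set V).Pairwise fun x y => ⟪x, y⟫_ℝ = 0)
    (h₁ : B₁ ⊆ A) (h₂ : B₂ ⊆ A) (hd : Disjoint B₁ B₂) :
    RPlus P B₁ ⊆ RPlus P (B₁ ∪ B₂) := fun β ⟨hβ, hneg⟩ =>
  ⟨hβ, by
    rw [SRefl_union hd (horth.mono (Finset.coe_subset.mpr (Finset.union_subset h₁ h₂)))]
    exact (hsharp B₁ h₁ B₂ h₂ hd β hβ hneg).2⟩

theorem RPlus_union_subset [DecidableEq V] (hsharp : PropSharpSharp P A) (hR : IsRootSystem R)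
    (hP : IsPositiveSystem R P) (hAR : (A : Set V) ⊆ R)
    (horth : (A : Set V).Pairwise fun x y => ⟪x, y⟫_ℝ = 0)
    (h₁ : B₁ ⊆ A) (h₂ : B₂ ⊆ A) (hd : Disjoint B₁ B₂) :
    RPlus P (B₁ ∪ B₂) ⊆ RPlus P B₁ ∪ RPlus P B₂ := by
  rintro β ⟨hβ, hneg⟩
  by_cases h₂neg : -SRefl B₂ β ∈ P
  · exact Or.inr ⟨hβ, h₂neg⟩
  have horth₂ : (B₂ : Set V).Pairwise fun x y => ⟪x, y⟫_ℝ = 0 := horth.mono (by simpa)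
  have hγP : SRefl B₂ β ∈ P :=
    (hP.mem_or_neg_mem _ (hR.SRefl_mem ((Finset.coe_subset.mpr h₂).trans hAR) horth₂
      (hP.subset hβ))).resolve_right h₂neg
  -- apply `##` to the positive root `γ = S_{B₂} β`, which `S_{B₁}` makes negative
  rw [SRefl_union hd (horth.mono (Finset.coe_subset.mpr (Finset.union_subset h₁ h₂)))] at hneg
  have := (hsharp B₁ h₁ B₂ h₂ hd _ hγP hneg).2
  rw [SRefl_SRefl horth₂ fun α hα => hR.ne_zero α (hAR (h₂ hα))] at this
  exact Or.inl ⟨hβ, this⟩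

end PropSharpSharp

/-- Under property `##`, for disjoint `A', A'' ⊆ A` the sets `R⁺_{A'}` and `R⁺_{A''}`
are disjoint and `R⁺_{A'∪A''} = R⁺_{A'} ∪ R⁺_{A''}`. -/
theorem statement6 [DecidableEq V] (R P : Set V) (A : Finset V) (hR : IsRootSystem R)
    (hP : IsPositiveSystem R P) (hA : IsSOS R ↑A) (hsharp2 : PropSharpSharp P A)
    (A' A'' : Finset V) (hA' : A' ⊆ A) (hA'' : A'' ⊆ A) (hdisj : Disjoint A' A'') :
    Disjoint (RPlus P A') (RPlus P A'') ∧
      RPlus P (A' ∪ A'') = RPlus P A' ∪ RPlus P A'' := by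
  have horth := hsharp2.pairwise_inner_eq_zero hR hP hA
  refine ⟨hsharp2.disjoint_RPlus hP hA' hA'' hdisj,
    (hsharp2.RPlus_union_subset hR hP hA.1 horth hA' hA'' hdisj).antisymm
      (Set.union_subset (hsharp2.RPlus_subset_RPlus_union horth hA' hA'' hdisj) ?_)⟩
  rw [Finset.union_comm]
  exact hsharp2.RPlus_subset_RPlus_union horth hA'' hA' hdisj.symm
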